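/- arXiv:1411.4306 — 7 statements merged into one kernel-verified Lean document; each statement's English description precedes it below -/
import Mathlib

section
/- Let X be a compact metric space and (F_i)_{i=1,…,N} a finite open cover of X. Then there exist open sets F_i' with closure(F_i') ⊆ F_i for each i, such that X = ⋃_{i=1}^N F_i', and such that for every subset I ⊆ {1,…,N}: if ⋂_{i∈I} F_i ≠ ∅ then ⋂_{i∈I} F_i' ≠ ∅. -/
/-!
Shrink the cover by the classical shrinking lemma, then pick one point in every nonempty
`⋂ i ∈ I, F i` and put it back: for each `i` the finitely many chosen points lying in `F i` form
a closed subset of `F i`, so by normality they have an open neighbourhood whose closure stays in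
`F i`. Adding these neighbourhoods to the shrunk sets keeps every chosen point in the
intersection it was chosen from.
-/

open Set

theorem exists_iUnion_eq_closure_subset_of_isClosed_subset {ι X : Type*} [TopologicalSpace X]
    [NormalSpace X] {u K : ι → Set X} (uo : ∀ i, IsOpen (u i))
    (uf : ∀ x, {i | x ∈ u i}.Finite) (uU : ⋃ i, u i = univ) (hK : ∀ i, IsClosed (K i))
    (hKu : ∀ i, K i ⊆ u i) :
    ∃ v : ι → Set X, ⋃ i, v i = univ ∧ (∀ i, IsOpen (v i)) ∧ (∀ i, K i ⊆ v i) ∧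
      ∀ i, closure (v i) ⊆ u i := by
  obtain ⟨v, vU, vo, hvu⟩ := exists_iUnion_eq_closure_subset uo uf uU
  choose w wo hKw hwu using fun i => normal_exists_closure_subset (hK i) (uo i) (hKu i)
  refine ⟨fun i => v i ∪ w i, ?_, fun i => (vo i).union (wo i),
    fun i => (hKw i).trans subset_union_right, fun i => ?_⟩
  · exact univ_subset_iff.1 (vU ▸ iUnion_mono fun i => subset_union_left)
  · rw [closure_union]
    exact union_subset (hvu i) (hwu i)

theorem stmt_4_general {X : Type*} [MetricSpace X] {N : ℕ}
    (F : Fin N → Set X) (hopen : ∀ i, IsOpen (F i)) (hcov : (⋃ i, F i) = Set.univ) :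
    ∃ F' : Fin N → Set X,
      (∀ i, IsOpen (F' i)) ∧
      (∀ i, closure (F' i) ⊆ F i) ∧
      (⋃ i, F' i) = Set.univ ∧
      ∀ I : Set (Fin N), (⋂ i ∈ I, F i).Nonempty → (⋂ i ∈ I, F' i).Nonempty := by
  choose p hp using fun (I : {I : Set (Fin N) // (⋂ i ∈ I, F i).Nonempty}) => I.2
  let K i := p '' {I | i ∈ I.1}
  have hKF i : K i ⊆ F i := by
    rintro _ ⟨I, hi, rfl⟩
    exact mem_iInter₂.1 (hp I) i hi
  obtain ⟨F', hcov', hopen', hKF', hF'F⟩ :=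
    exists_iUnion_eq_closure_subset_of_isClosed_subset hopen (fun _ => toFinite _) hcov
      (fun i => (toFinite (K i)).isClosed) hKF
  refine ⟨F', hopen', hF'F, hcov', fun I hI => ⟨p ⟨I, hI⟩, mem_iInter₂.2 fun i hi => ?_⟩⟩
  exact hKF' i ⟨⟨I, hI⟩, hi, rfl⟩

/-- Every finite open cover `(F i)` of a compact metric space `X` admits a shrinking
`(F' i)` (with `closure (F' i) ⊆ F i`, still covering `X`) such that every nonempty
intersection of the `F i` gives a nonempty intersection of the `F' i`. -/
theorem stmt_4 {X : Type*} [MetricSpace X] [CompactSpace X] {N : ℕ}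
    (F : Fin N → Set X) (hopen : ∀ i, IsOpen (F i)) (hcov : (⋃ i, F i) = Set.univ) :
    ∃ F' : Fin N → Set X,
      (∀ i, IsOpen (F' i)) ∧
      (∀ i, closure (F' i) ⊆ F i) ∧
      (⋃ i, F' i) = Set.univ ∧
      ∀ I : Set (Fin N), (⋂ i ∈ I, F i).Nonempty → (⋂ i ∈ I, F' i).Nonempty :=
  stmt_4_general F hopen hcov
end

section
/- Let U be a locally compact metric space, U' an open subset of U with compact closure, and Z ⊆ U' a subset that is closed in the subspace topology of U'. Suppose Z_1,…,Z_N are subsets of Z that are open in the subspace topology of Z, and for every nonempty K ⊆ {1,…,N} an open subset W_K ⊆ U' is given with W_K ∩ Z = Z_K, where Z_K := ⋂_{i∈K} Z_i. Then there exist open subsets U_K ⊆ W_K for every nonempty K ⊆ {1,…,N} such that U_K ∩ Z = Z_K and U_J ∩ U_K = U_{J∪K} for all nonempty J, K ⊆ {1,…,N}. -/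
/-!
Choose for every point `z` a radius `ρ z > 0` such that `ball z (ρ z) ⊆ W K` for every `K`
with `z ∈ Z_K`, and let `U_K` be the union of the half-radius balls `ball z (ρ z / 2)` over
`z ∈ Z_K`. If `x` lies in half-balls around `z_i ∈ Z_i` for all `i ∈ K`, the centre `z_{i₀}` of
smallest radius lies in every full ball `ball z_i (ρ z_i)`, hence (taking `K = {i}`) in every
`Z_i`. So the union of half-balls over `Z_K` is the intersection of those over the `Z_i`,
`i ∈ K`, which gives `U_J ∩ U_K = U_{J ∪ K}`.
-/

open Metric Set Filter Topology

universe u v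

variable {X : Type u} [PseudoMetricSpace X]

theorem exists_ball_subset_of_finite {ι : Type v} [Finite ι] {x : X} {s : ι → Set X}
    {p : ι → Prop} (h : ∀ i, p i → s i ∈ 𝓝 x) : ∃ ε > 0, ∀ i, p i → ball x ε ⊆ s i := by
  have hmem : (⋂ i ∈ {i | p i}, s i) ∈ 𝓝 x := (biInter_mem (Set.toFinite _)).2 h
  obtain ⟨ε, hε, hball⟩ := Metric.mem_nhds_iff.1 hmem
  exact ⟨ε, hε, fun i hi => hball.trans (biInter_subset_of_mem hi)⟩

def halfBallUnion (ρ : X → ℝ) (S : Set X) : Set X :=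
  ⋃ z ∈ S, ball z (ρ z / 2)

section halfBallUnion

variable {ρ : X → ℝ} {S T Z : Set X}

theorem isOpen_halfBallUnion (ρ : X → ℝ) (S : Set X) : IsOpen (halfBallUnion ρ S) :=
  isOpen_biUnion fun _ _ => isOpen_ball

theorem halfBallUnion_mono (h : S ⊆ T) : halfBallUnion ρ S ⊆ halfBallUnion ρ T :=
  biUnion_subset_biUnion_left h

theorem subset_halfBallUnion (hρ : ∀ z ∈ S, 0 < ρ z) : S ⊆ halfBallUnion ρ S :=
  fun z hz => mem_biUnion hz (mem_ball_self (half_pos (hρ z hz)))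

theorem halfBallUnion_subset_iUnion_ball (hρ : ∀ z ∈ S, 0 < ρ z) :
    halfBallUnion ρ S ⊆ ⋃ z ∈ S, ball z (ρ z) :=
  biUnion_mono subset_rfl fun z hz => ball_subset_ball (half_le_self (hρ z hz).le)

theorem halfBallUnion_subset {O : Set X} (hρ : ∀ z ∈ S, 0 < ρ z)
    (hO : ∀ z ∈ S, ball z (ρ z) ⊆ O) : halfBallUnion ρ S ⊆ O :=
  (halfBallUnion_subset_iUnion_ball hρ).trans (iUnion₂_subset hO)

theorem halfBallUnion_inter_eq (hSZ : S ⊆ Z) (hρ : ∀ z ∈ S, 0 < ρ z)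
    (hρS : ∀ z ∈ S, ball z (ρ z) ∩ Z ⊆ S) : halfBallUnion ρ S ∩ Z = S := by
  refine Subset.antisymm ?_ (subset_inter (subset_halfBallUnion hρ) hSZ)
  rintro x ⟨hx, hxZ⟩
  obtain ⟨z, hz, hxz⟩ := mem_iUnion₂.1 (halfBallUnion_subset_iUnion_ball hρ hx)
  exact hρS z hz ⟨hxz, hxZ⟩

theorem mem_of_mem_halfBall_of_le (hρS : ∀ z ∈ S, ball z (ρ z) ∩ Z ⊆ S) {x y z : X}
    (hyZ : y ∈ Z) (hz : z ∈ S) (hxy : x ∈ ball y (ρ y / 2)) (hxz : x ∈ ball z (ρ z / 2))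
    (hle : ρ y ≤ ρ z) : y ∈ S := by
  refine hρS z hz ⟨?_, hyZ⟩
  rw [mem_ball] at hxy hxz ⊢
  calc dist y z ≤ dist x y + dist x z := dist_triangle_left y z x
    _ < ρ y / 2 + ρ z / 2 := add_lt_add hxy hxz
    _ ≤ ρ z := by linarith

theorem biInter_halfBallUnion {ι : Type v} {S : ι → Set X} (hSZ : ∀ i, S i ⊆ Z)
    (hρS : ∀ i, ∀ z ∈ S i, ball z (ρ z) ∩ Z ⊆ S i) {K : Finset ι} (hK : K.Nonempty) :
    ⋂ i ∈ K, halfBallUnion ρ (S i) = halfBallUnion ρ (⋂ i ∈ K, S i) := by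
  refine Subset.antisymm (fun x hx => ?_)
    (subset_iInter₂ fun i hi => halfBallUnion_mono (biInter_subset_of_mem hi))
  have : Nonempty X := ⟨x⟩
  have hcentres : ∀ i ∈ K, ∃ z ∈ S i, x ∈ ball z (ρ z / 2) := fun i hi => by
    simpa only [halfBallUnion, mem_iUnion, exists_prop] using mem_iInter₂.1 hx i hi
  choose! c hcS hxc using hcentres
  obtain ⟨i₀, hi₀, hmin⟩ := K.exists_min_image (fun i => ρ (c i)) hK
  refine mem_biUnion (mem_iInter₂.2 fun i hi => ?_) (hxc i₀ hi₀)
  exact mem_of_mem_halfBall_of_le (hρS i) (hSZ i₀ (hcS i₀ hi₀)) (hcS i hi) (hxc i₀ hi₀)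
    (hxc i hi) (hmin i hi)

end halfBallUnion

theorem stmt_5_general {U : Type*} [MetricSpace U] {N : ℕ}
    {Z : Set U}
    (Zi : Fin N → Set U) (hZiZ : ∀ i, Zi i ⊆ Z)
    (W : Finset (Fin N) → Set U)
    (hWopen : ∀ K : Finset (Fin N), K.Nonempty → IsOpen (W K))
    (hWZ : ∀ K : Finset (Fin N), K.Nonempty → W K ∩ Z = ⋂ i ∈ K, Zi i) :
    ∃ UU : Finset (Fin N) → Set U,
      (∀ K : Finset (Fin N), K.Nonempty → IsOpen (UU K)) ∧
      (∀ K : Finset (Fin N), K.Nonempty → UU K ⊆ W K) ∧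
      (∀ K : Finset (Fin N), K.Nonempty → UU K ∩ Z = ⋂ i ∈ K, Zi i) ∧
      (∀ J K : Finset (Fin N), J.Nonempty → K.Nonempty → UU J ∩ UU K = UU (J ∪ K)) := by
  have hradius : ∀ z, ∃ ε > 0, ∀ K : Finset (Fin N),
      K.Nonempty ∧ z ∈ ⋂ i ∈ K, Zi i → ball z ε ⊆ W K := fun z =>
    exists_ball_subset_of_finite fun K ⟨hK, hz⟩ =>
      (hWopen K hK).mem_nhds (hWZ K hK ▸ hz).1
  choose ρ hρpos hρW using hradius
  have hρZ : ∀ K : Finset (Fin N), K.Nonempty → ∀ z ∈ ⋂ i ∈ K, Zi i,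
      ball z (ρ z) ∩ Z ⊆ ⋂ i ∈ K, Zi i := fun K hK z hz =>
    hWZ K hK ▸ inter_subset_inter_left Z (hρW z K ⟨hK, hz⟩)
  have hρZi : ∀ i, ∀ z ∈ Zi i, ball z (ρ z) ∩ Z ⊆ Zi i := by
    simpa using fun i => hρZ {i} (Finset.singleton_nonempty i)
  refine ⟨fun K => halfBallUnion ρ (⋂ i ∈ K, Zi i), fun K _ => isOpen_halfBallUnion _ _,
    fun K hK => halfBallUnion_subset (fun z _ => hρpos z) fun z hz => hρW z K ⟨hK, hz⟩,
    fun K hK => ?_, fun J K hJ hK => ?_⟩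
  · obtain ⟨i, hi⟩ := hK
    exact halfBallUnion_inter_eq ((biInter_subset_of_mem hi).trans (hZiZ i))
      (fun z _ => hρpos z) (hρZ K ⟨i, hi⟩)
  · dsimp only
    rw [← biInter_halfBallUnion hZiZ hρZi hJ, ← biInter_halfBallUnion hZiZ hρZi hK,
      ← biInter_halfBallUnion hZiZ hρZi (hJ.mono Finset.subset_union_left),
      Finset.set_biInter_inter]

/-- Let `U` be a locally compact metric space, `U'` an open subset with compact closure,
and `Z ⊆ U'` relatively closed in `U'`.  Given relatively open subsets `Z i ⊆ Z` and, for
every nonempty `K ⊆ {1,…,N}`, open sets `W K ⊆ U'` with `W K ∩ Z = ⋂ i ∈ K, Z i`, there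
exist open sets `UU K ⊆ W K` with `UU K ∩ Z = ⋂ i ∈ K, Z i` and
`UU J ∩ UU K = UU (J ∪ K)`. -/
theorem stmt_5 {U : Type*} [MetricSpace U] [LocallyCompactSpace U] {N : ℕ}
    {U' Z : Set U} (hU'open : IsOpen U') (hU'cpt : IsCompact (closure U'))
    (hZU' : Z ⊆ U') (hZclosed : ∃ C : Set U, IsClosed C ∧ Z = C ∩ U')
    (Zi : Fin N → Set U) (hZiZ : ∀ i, Zi i ⊆ Z)
    (hZiopen : ∀ i, ∃ V : Set U, IsOpen V ∧ Zi i = V ∩ Z)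
    (W : Finset (Fin N) → Set U)
    (hWopen : ∀ K : Finset (Fin N), K.Nonempty → IsOpen (W K))
    (hWsub : ∀ K : Finset (Fin N), K.Nonempty → W K ⊆ U')
    (hWZ : ∀ K : Finset (Fin N), K.Nonempty → W K ∩ Z = ⋂ i ∈ K, Zi i) :
    ∃ UU : Finset (Fin N) → Set U,
      (∀ K : Finset (Fin N), K.Nonempty → IsOpen (UU K)) ∧
      (∀ K : Finset (Fin N), K.Nonempty → UU K ⊆ W K) ∧
      (∀ K : Finset (Fin N), K.Nonempty → UU K ∩ Z = ⋂ i ∈ K, Zi i) ∧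
      (∀ J K : Finset (Fin N), J.Nonempty → K.Nonempty → UU J ∩ UU K = UU (J ∪ K)) :=
  stmt_5_general Zi hZiZ W hWopen hWZ
end

section
/- Let 𝓘 be a finite partially ordered set such that (a) every subset of 𝓘 possessing an upper bound in 𝓘 has a least upper bound in 𝓘, and (b) every J ∈ 𝓘 is the least upper bound of the set m(J) of minimal elements of 𝓘 that are ≤ J. Let X be a compact metrizable space and (P_I)_{I∈𝓘} an open cover of X such that whenever P_I ∩ P_J ≠ ∅, the pair {I, J} has an upper bound in 𝓘 and P_I ∩ P_J ⊆ P_{I∨J}, where I∨J denotes the least upper bound. Then there exist open subsets Z_I ⊆ X (possibly empty) for I ∈ 𝓘 such that: (i) closure(Z_I) ⊆ P_I for all I; (ii) if closure(Z_I) ∩ closure(Z_J) ≠ ∅ then I ≤ J or J ≤ I; (iii) X = ⋃_{I∈𝓘} Z_I. -/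
/-!
Choose continuous functions `f I` that are positive exactly on `P I` (possible since metrizable
spaces are perfectly normal), and let `U I := dominanceSet f I` be the open set where `f I` is positive and strictly
larger than every `f J` with `J` incomparable to `I`. Points of `U I ∩ U J` force `I` and `J` to be
comparable. At a point `x`, the indices `I` with `x ∈ P I` form a directed set by the intersection
hypothesis, hence have a greatest element `M`; every `J` incomparable to `M` has `f J x = 0`, so
`x ∈ U M`. Shrinking the finite open cover `U` so that closures stay inside it gives `Z`.
-/

open Set

theorem IsOpen.exists_continuous_pos_iff_mem {X : Type*} [TopologicalSpace X]
    [PerfectlyNormalSpace X] {U : Set X} (hU : IsOpen U) :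
    ∃ f : X → ℝ, Continuous f ∧ ∀ x, 0 < f x ↔ x ∈ U := by
  obtain ⟨f, hf, hf01⟩ :=
    perfectlyNormalSpace_iff_forall_isClosed_preimage_zero.1 ‹_› Uᶜ hU.isClosed_compl
  refine ⟨f, f.continuous, fun x => ?_⟩
  rw [← not_iff_not, ← mem_compl_iff, hf, not_lt]
  exact ⟨fun h => le_antisymm h (hf01 x).1, fun h => h.le⟩

theorem DirectedOn.exists_isGreatest_of_finite {α : Type*} [Preorder α] {s : Set α}
    (hd : DirectedOn (· ≤ ·) s) (hs : s.Finite) (hne : s.Nonempty) : ∃ M, IsGreatest s M := by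
  obtain ⟨M, hM⟩ := hs.exists_maximal hne
  refine ⟨M, hM.prop, fun a ha => ?_⟩
  obtain ⟨c, hc, hMc, hac⟩ := hd M hM.prop a ha
  exact hac.trans (hM.le_of_ge hc hMc)

section Dominance

variable {ι X : Type*} [Preorder ι]

def dominanceSet (f : ι → X → ℝ) (I : ι) : Set X :=
  {x | 0 < f I x ∧ ∀ J, ¬(I ≤ J ∨ J ≤ I) → f J x < f I x}

theorem isOpen_dominanceSet [TopologicalSpace X] [Finite ι] {f : ι → X → ℝ} (hf : ∀ I, Continuous (f I)) (I : ι) :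
    IsOpen (dominanceSet f I) := by
  have hdom : dominanceSet f I =
      {x | 0 < f I x} ∩ ⋂ (J : ι) (_ : ¬(I ≤ J ∨ J ≤ I)), {x | f J x < f I x} := by
    ext x
    simp only [dominanceSet, mem_ofPred_eq, mem_inter_iff, mem_iInter]
  rw [hdom]
  exact (isOpen_lt continuous_const (hf I)).inter <| isOpen_iInter_of_finite fun J =>
    isOpen_iInter_of_finite fun _ => isOpen_lt (hf J) (hf I)

theorem le_or_ge_of_mem_dominanceSet {f : ι → X → ℝ} {I J : ι} {x : X}
    (hI : x ∈ dominanceSet f I) (hJ : x ∈ dominanceSet f J) : I ≤ J ∨ J ≤ I := by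
  by_contra hIJ
  exact (hI.2 J hIJ).asymm (hJ.2 I fun h => hIJ h.symm)

theorem mem_dominanceSet_of_isGreatest {f : ι → X → ℝ} {P : ι → Set X}
    (hfP : ∀ I x, 0 < f I x ↔ x ∈ P I) {x : X} {M : ι} (hM : IsGreatest {I | x ∈ P I} M) :
    x ∈ dominanceSet f M := by
  refine ⟨(hfP M x).2 hM.1, fun J hJ => ?_⟩
  have hxJ : x ∉ P J := fun hxJ => hJ (Or.inr (hM.2 hxJ))
  rw [← hfP] at hxJ
  exact (not_lt.1 hxJ).trans_lt ((hfP M x).2 hM.1)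

end Dominance

theorem directedOn_setOf_mem {ι X : Type*} [Preorder ι] {P : ι → Set X}
    (hPcap : ∀ I J : ι, (P I ∩ P J).Nonempty → ∃ K, IsLUB {I, J} K ∧ P I ∩ P J ⊆ P K) (x : X) :
    DirectedOn (· ≤ ·) {I | x ∈ P I} := by
  intro I hI J hJ
  obtain ⟨K, hK, hIJK⟩ := hPcap I J ⟨x, hI, hJ⟩
  exact ⟨K, hIJK ⟨hI, hJ⟩, hK.1 (mem_insert I {J}), hK.1 (mem_insert_of_mem I rfl)⟩

theorem stmt_6_general {α : Type*} [PartialOrder α] [Finite α]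
    {X : Type*} [TopologicalSpace X] [TopologicalSpace.MetrizableSpace X]
    (P : α → Set X) (hP : ∀ I, IsOpen (P I)) (hPcov : (⋃ I, P I) = Set.univ)
    (hPcap : ∀ I J : α, (P I ∩ P J).Nonempty → ∃ K, IsLUB {I, J} K ∧ P I ∩ P J ⊆ P K) :
    ∃ Z : α → Set X,
      (∀ I, IsOpen (Z I)) ∧
      (∀ I, closure (Z I) ⊆ P I) ∧
      (∀ I J, (closure (Z I) ∩ closure (Z J)).Nonempty → I ≤ J ∨ J ≤ I) ∧
      (⋃ I, Z I) = Set.univ := by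
  choose f hf hfP using fun I => (hP I).exists_continuous_pos_iff_mem
  have hU_cover : ⋃ I, dominanceSet f I = univ := by
    refine eq_univ_of_forall fun x => mem_iUnion.2 ?_
    obtain ⟨M, hM⟩ := (directedOn_setOf_mem hPcap x).exists_isGreatest_of_finite (toFinite _)
      (mem_iUnion.1 (hPcov.symm ▸ mem_univ x))
    exact ⟨M, mem_dominanceSet_of_isGreatest hfP hM⟩
  obtain ⟨Z, hZ_cover, hZ_open, hZ_sub⟩ :=
    exists_iUnion_eq_closure_subset (isOpen_dominanceSet hf) (fun _ => toFinite _) hU_cover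
  refine ⟨Z, hZ_open, fun I => (hZ_sub I).trans fun x hx => (hfP I x).1 hx.1, ?_, hZ_cover⟩
  rintro I J ⟨x, hxI, hxJ⟩
  exact le_or_ge_of_mem_dominanceSet (hZ_sub I hxI) (hZ_sub J hxJ)

/-- Cover reduction: let `α` be a finite poset such that (a) every subset with an upper
bound has a least upper bound, and (b) every element is the least upper bound of the set
of minimal elements below it.  Given an open cover `(P I)` of a compact metrizable space
`X` such that `P I ∩ P J ≠ ∅` implies `{I, J}` has a least upper bound `K` with
`P I ∩ P J ⊆ P K`, there is a "cover reduction" `(Z I)`. -/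
theorem stmt_6 {α : Type*} [PartialOrder α] [Finite α]
    (ha : ∀ S : Set α, (upperBounds S).Nonempty → ∃ l, IsLUB S l)
    (hb : ∀ J : α, IsLUB {H : α | IsMin H ∧ H ≤ J} J)
    {X : Type*} [TopologicalSpace X] [CompactSpace X] [TopologicalSpace.MetrizableSpace X]
    (P : α → Set X) (hP : ∀ I, IsOpen (P I)) (hPcov : (⋃ I, P I) = Set.univ)
    (hPcap : ∀ I J : α, (P I ∩ P J).Nonempty → ∃ K, IsLUB {I, J} K ∧ P I ∩ P J ⊆ P K) :
    ∃ Z : α → Set X,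
      (∀ I, IsOpen (Z I)) ∧
      (∀ I, closure (Z I) ⊆ P I) ∧
      (∀ I J, (closure (Z I) ∩ closure (Z J)).Nonempty → I ≤ J ∨ J ≤ I) ∧
      (⋃ I, Z I) = Set.univ :=
  stmt_6_general P hP hPcov hPcap
end

section
/- Let X be a compact metric space, N ≥ 1, and let 𝓘 be a collection of nonempty subsets of {1,…,N}. Suppose (Z_J)_{J∈𝓘} are open subsets of X with X = ⋃_{J∈𝓘} Z_J, such that whenever closure(Z_I) ∩ closure(Z_J) ≠ ∅ one has I ⊆ J or J ⊆ I. Then there exist continuous functions β_i : X → [0,1] for i = 1,…,N with ∑_{i=1}^N β_i(x) = 1 for all x ∈ X, and such that β_i(x) = 0 whenever there exists J ∈ 𝓘 with i ∉ J and x ∈ closure(Z_J). In particular, ∑_{i∈J} β_i(x) = 1 for every J ∈ 𝓘 and every x ∈ Z_J. -/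
/-!
Let `F i` be the union of the closures `closure (Z J)` with `J ∈ C` and `i ∉ J`; these are
finitely many closed sets. A point `x` lies in `closure (Z J)` for some `J ∈ C`, and by the
nesting hypothesis the closures through `x` come with a least index set `J₀`, which is nonempty;
any `i ∈ J₀` then has `x ∉ F i`. So the open sets `(F i)ᶜ` cover `X`, and a partition of unity
subordinate to this cover is the required one.
-/

open Set

theorem exists_partitionOfUnity_eq_zero_on {ι X : Type*} [Fintype ι] [TopologicalSpace X]
    [NormalSpace X] (F : ι → Set X) (hF : ∀ i, IsClosed (F i)) (hcov : ∀ x, ∃ i, x ∉ F i) :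
    ∃ β : ι → X → ℝ, (∀ i, Continuous (β i)) ∧ (∀ i x, β i x ∈ Icc (0 : ℝ) 1) ∧
      (∀ x, ∑ i, β i x = 1) ∧ ∀ i, ∀ x ∈ F i, β i x = 0 := by
  obtain ⟨ρ, hρ⟩ := PartitionOfUnity.exists_isSubordinate_of_locallyFinite isClosed_univ
    (fun i => (F i)ᶜ) (fun i => (hF i).isOpen_compl) (locallyFinite_of_finite _)
    (fun x _ => mem_iUnion.2 (hcov x))
  refine ⟨fun i => ρ i, fun i => (ρ i).continuous, fun i x => ⟨ρ.nonneg i x, ρ.le_one i x⟩,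
    fun x => ?_, fun i x hx => ?_⟩
  · rw [← finsum_eq_sum_of_fintype]
    exact ρ.sum_eq_one (mem_univ x)
  · exact image_eq_zero_of_notMem_tsupport fun h => hρ i h hx

theorem exists_least_of_nested {α X : Type*} {C : Set (Finset α)} {A : Finset α → Set X}
    (hnest : ∀ I ∈ C, ∀ J ∈ C, (A I ∩ A J).Nonempty → I ⊆ J ∨ J ⊆ I) {x : X}
    (hx : ∃ J ∈ C, x ∈ A J) : ∃ J ∈ C, x ∈ A J ∧ ∀ J' ∈ C, x ∈ A J' → J ⊆ J' := by
  obtain ⟨J, hJ⟩ := hx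
  obtain ⟨J₀, -, ⟨hJ₀C, hxJ₀⟩, hmin⟩ :=
    exists_minimal_le_of_wellFoundedLT (fun J => J ∈ C ∧ x ∈ A J) J hJ
  refine ⟨J₀, hJ₀C, hxJ₀, fun J' hJ'C hxJ' => ?_⟩
  rcases hnest J₀ hJ₀C J' hJ'C ⟨x, hxJ₀, hxJ'⟩ with h | h
  · exact h
  · exact hmin ⟨hJ'C, hxJ'⟩ h

theorem exists_forall_mem_of_nested {α X : Type*} {C : Set (Finset α)} {A : Finset α → Set X}
    (hC : ∀ J ∈ C, J.Nonempty) (hcov : ∀ x, ∃ J ∈ C, x ∈ A J)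
    (hnest : ∀ I ∈ C, ∀ J ∈ C, (A I ∩ A J).Nonempty → I ⊆ J ∨ J ⊆ I) (x : X) :
    ∃ i, ∀ J ∈ C, x ∈ A J → i ∈ J := by
  obtain ⟨J₀, hJ₀C, -, hleast⟩ := exists_least_of_nested hnest (hcov x)
  obtain ⟨i, hi⟩ := hC J₀ hJ₀C
  exact ⟨i, fun J hJC hxJ => hleast J hJC hxJ hi⟩

theorem stmt_7_general {X : Type*} [MetricSpace X] {N : ℕ}
    (C : Set (Finset (Fin N))) (hC : ∀ J ∈ C, J.Nonempty)
    (Z : Finset (Fin N) → Set X)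
    (hZcov : (⋃ J ∈ C, Z J) = Set.univ)
    (hZnest : ∀ I ∈ C, ∀ J ∈ C, (closure (Z I) ∩ closure (Z J)).Nonempty → I ⊆ J ∨ J ⊆ I) :
    ∃ β : Fin N → X → ℝ,
      (∀ i, Continuous (β i)) ∧
      (∀ i x, β i x ∈ Set.Icc (0 : ℝ) 1) ∧
      (∀ x, ∑ i, β i x = 1) ∧
      (∀ i x, (∃ J ∈ C, i ∉ J ∧ x ∈ closure (Z J)) → β i x = 0) ∧
      (∀ J ∈ C, ∀ x ∈ Z J, ∑ i ∈ J, β i x = 1) := by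
  let F : Fin N → Set X := fun i => ⋃ J ∈ {J ∈ C | i ∉ J}, closure (Z J)
  have hcov : ∀ x, ∃ J ∈ C, x ∈ closure (Z J) := fun x => by
    obtain ⟨J, hJ, hx⟩ := mem_iUnion₂.1 (hZcov.symm ▸ mem_univ x)
    exact ⟨J, hJ, subset_closure hx⟩
  obtain ⟨β, hcont, hIcc, hsum, hzero⟩ := exists_partitionOfUnity_eq_zero_on F
    (fun i => (toFinite _).isClosed_biUnion fun _ _ => isClosed_closure) fun x => by
      obtain ⟨i, hi⟩ := exists_forall_mem_of_nested hC hcov hZnest x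
      exact ⟨i, fun hx => by
        obtain ⟨J, ⟨hJC, hiJ⟩, hxJ⟩ := mem_iUnion₂.1 hx
        exact hiJ (hi J hJC hxJ)⟩
  have hvanish : ∀ i x, (∃ J ∈ C, i ∉ J ∧ x ∈ closure (Z J)) → β i x = 0 :=
    fun i x ⟨J, hJC, hiJ, hxJ⟩ => hzero i x (mem_biUnion ⟨hJC, hiJ⟩ hxJ)
  refine ⟨β, hcont, hIcc, hsum, hvanish, fun J hJC x hx => ?_⟩
  rw [← hsum x]
  exact Finset.sum_subset J.subset_univ fun i _ hiJ =>
    hvanish i x ⟨J, hJC, hiJ, subset_closure hx⟩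

/-- Partition of unity adapted to a cover reduction: given a cover of a compact metric
space `X` by open sets `Z J`, indexed by a collection `C` of nonempty subsets of
`{1,…,N}`, whose closures intersect only for nested index sets, there are continuous
functions `β i : X → [0,1]` summing to `1` with `β i x = 0` whenever `x ∈ closure (Z J)`
for some `J ∈ C` with `i ∉ J`; in particular `∑ i ∈ J, β i x = 1` on `Z J`. -/
theorem stmt_7 {X : Type*} [MetricSpace X] [CompactSpace X] {N : ℕ} (hN : 1 ≤ N)
    (C : Set (Finset (Fin N))) (hC : ∀ J ∈ C, J.Nonempty)
    (Z : Finset (Fin N) → Set X)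
    (hZopen : ∀ J ∈ C, IsOpen (Z J))
    (hZcov : (⋃ J ∈ C, Z J) = Set.univ)
    (hZnest : ∀ I ∈ C, ∀ J ∈ C, (closure (Z I) ∩ closure (Z J)).Nonempty → I ⊆ J ∨ J ⊆ I) :
    ∃ β : Fin N → X → ℝ,
      (∀ i, Continuous (β i)) ∧
      (∀ i x, β i x ∈ Set.Icc (0 : ℝ) 1) ∧
      (∀ x, ∑ i, β i x = 1) ∧
      (∀ i x, (∃ J ∈ C, i ∉ J ∧ x ∈ closure (Z J)) → β i x = 0) ∧
      (∀ J ∈ C, ∀ x ∈ Z J, ∑ i ∈ J, β i x = 1) :=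
  stmt_7_general C hC Z hZcov hZnest
end

section
/- Let X be a Hausdorff topological space which admits an exhaustion X = ⋃_{k≥1} O_k by open sets O_k with compact closure satisfying closure(O_k) ⊆ O_{k+1} for all k. Let R be an equivalence relation on X which is closed as a subset of X × X. Then the quotient space X/R, with the quotient topology, is Hausdorff. -/
/-!
Bourbaki's argument. The hypotheses make `X` locally compact and σ-compact, with compact
exhaustion `K₀ ⊆ K₁ ⊆ ⋯`, and closedness of the relation makes the saturation of every compact
set closed, i.e. the image in `X/R` of a compact set is closed. Given disjoint closed sets
`A, B` of `X/R`, grow them alternately into increasing disjoint closed sets `Sₙ, Tₙ`: enlarge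
`Sₙ` by the image of a compact neighbourhood of `q⁻¹ Sₙ ∩ Kₙ` that misses `q⁻¹ Tₙ`, then
likewise for `Tₙ`. The unions `⋃ Sₙ` and `⋃ Tₙ` have open preimages, so `X/R` is normal; its
points are images of compact sets, hence closed, so `X/R` is Hausdorff.
-/

open Set Topology

section

variable {X Y : Type*} [TopologicalSpace X] [TopologicalSpace Y]

lemma isOpen_iUnion_of_subset_interior {P K : ℕ → Set X} (hP : Monotone P) (hK : Monotone K)
    (hKcov : ⋃ n, K n = univ) (hPK : ∀ n, P n ∩ K n ⊆ interior (P (n + 1))) :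
    IsOpen (⋃ n, P n) := by
  refine isOpen_iff_mem_nhds.2 fun x hx => ?_
  obtain ⟨n, hxn⟩ := mem_iUnion.1 hx
  obtain ⟨m, hxm⟩ := mem_iUnion.1 (hKcov.symm ▸ mem_univ x : x ∈ ⋃ n, K n)
  have hx' : x ∈ interior (P (max n m + 1)) :=
    hPK _ ⟨hP (le_max_left n m) hxn, hK (le_max_right n m) hxm⟩
  exact Filter.mem_of_superset (mem_interior_iff_mem_nhds.1 hx') (subset_iUnion P _)

variable [LocallyCompactSpace X] {q : X → Y}

lemma exists_isClosed_superset_disjoint (hq : Continuous q)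
    (hqK : ∀ K, IsCompact K → IsClosed (q '' K)) {S T : Set Y} (hS : IsClosed S)
    (hT : IsClosed T) (hST : Disjoint S T) {K : Set X} (hK : IsCompact K) :
    ∃ S', IsClosed S' ∧ S ⊆ S' ∧ Disjoint S' T ∧ q ⁻¹' S ∩ K ⊆ interior (q ⁻¹' S') := by
  obtain ⟨L, hL, hSL, hLT⟩ := exists_compact_between (hK.inter_left (hS.preimage hq))
    (hT.isOpen_compl.preimage hq) fun x hx => hST.notMem_of_mem_left hx.1
  refine ⟨S ∪ q '' L, hS.union (hqK L hL), subset_union_left,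
    disjoint_union_left.2 ⟨hST, disjoint_left.2 ?_⟩, hSL.trans (interior_mono ?_)⟩
  · rintro y ⟨x, hx, rfl⟩ hy
    exact hLT hx hy
  · exact fun x hx => Or.inr (mem_image_of_mem q hx)

lemma exists_seq_disjoint_isClosed (hq : Continuous q)
    (hqK : ∀ K, IsCompact K → IsClosed (q '' K)) {K : ℕ → Set X} (hK : ∀ n, IsCompact (K n))
    {A B : Set Y} (hA : IsClosed A) (hB : IsClosed B) (hAB : Disjoint A B) :
    ∃ S T : ℕ → Set Y, S 0 = A ∧ T 0 = B ∧ Monotone S ∧ Monotone T ∧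
      (∀ n, Disjoint (S n) (T n)) ∧ (∀ n, q ⁻¹' S n ∩ K n ⊆ interior (q ⁻¹' S (n + 1))) ∧
      ∀ n, q ⁻¹' T n ∩ K n ⊆ interior (q ⁻¹' T (n + 1)) := by
  let Pair := {p : Set Y × Set Y // IsClosed p.1 ∧ IsClosed p.2 ∧ Disjoint p.1 p.2}
  have step (n : ℕ) (p : Pair) : ∃ p' : Pair, p.1.1 ⊆ p'.1.1 ∧ p.1.2 ⊆ p'.1.2 ∧
      q ⁻¹' p.1.1 ∩ K n ⊆ interior (q ⁻¹' p'.1.1) ∧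
      q ⁻¹' p.1.2 ∩ K n ⊆ interior (q ⁻¹' p'.1.2) := by
    obtain ⟨⟨S, T⟩, hS, hT, hST⟩ := p
    obtain ⟨S', hS', hSS', hS'T, hSK⟩ := exists_isClosed_superset_disjoint hq hqK hS hT hST (hK n)
    obtain ⟨T', hT', hTT', hT'S', hTK⟩ :=
      exists_isClosed_superset_disjoint hq hqK hT hS' hS'T.symm (hK n)
    exact ⟨⟨(S', T'), hS', hT', hT'S'.symm⟩, hSS', hTT', hSK, hTK⟩
  choose next hnext using step
  let p : ℕ → Pair := fun n => Nat.rec ⟨(A, B), hA, hB, hAB⟩ next n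
  exact ⟨fun n => (p n).1.1, fun n => (p n).1.2, rfl, rfl,
    monotone_nat_of_le_succ fun n => (hnext n (p n)).1,
    monotone_nat_of_le_succ fun n => (hnext n (p n)).2.1,
    fun n => (p n).2.2.2, fun n => (hnext n (p n)).2.2.1, fun n => (hnext n (p n)).2.2.2⟩

theorem Topology.IsCoinducing.normalSpace [SigmaCompactSpace X] (hq : IsCoinducing q)
    (hqK : ∀ K, IsCompact K → IsClosed (q '' K)) : NormalSpace Y := by
  refine ⟨fun A B hA hB hAB => ?_⟩
  obtain ⟨S, T, rfl, rfl, hSmono, hTmono, hST, hSK, hTK⟩ :=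
    exists_seq_disjoint_isClosed hq.continuous hqK (isCompact_compactCovering X) hA hB hAB
  have isOpen_iUnion_of_preimage {P : ℕ → Set Y} (hP : Monotone P)
      (hPK : ∀ n, q ⁻¹' P n ∩ compactCovering X n ⊆ interior (q ⁻¹' P (n + 1))) :
      IsOpen (⋃ n, P n) := by
    rw [← hq.isOpen_preimage, preimage_iUnion]
    exact isOpen_iUnion_of_subset_interior (fun _ _ h => preimage_mono (hP h))
      (compactCovering_subset X) (iUnion_compactCovering X) hPK
  refine ⟨⋃ n, S n, ⋃ n, T n, isOpen_iUnion_of_preimage hSmono hSK,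
    isOpen_iUnion_of_preimage hTmono hTK,
    subset_iUnion S 0, subset_iUnion T 0, ?_⟩
  simp only [disjoint_iUnion_left, disjoint_iUnion_right]
  exact fun m n => (hST (max m n)).mono (hSmono (le_max_right m n)) (hTmono (le_max_left m n))

theorem Topology.IsQuotientMap.t2Space [SigmaCompactSpace X] (hq : IsQuotientMap q)
    (hqK : ∀ K, IsCompact K → IsClosed (q '' K)) : T2Space Y := by
  have : NormalSpace Y := hq.isCoinducing.normalSpace hqK
  have : T1Space Y := ⟨fun y => by
    obtain ⟨x, rfl⟩ := hq.surjective y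
    simpa using hqK {x} isCompact_singleton⟩
  infer_instance

end

lemma Setoid.isClosed_image_mk {X : Type*} [TopologicalSpace X] {s : Setoid X}
    (hs : IsClosed {p : X × X | s.r p.1 p.2}) {K : Set X} (hK : IsCompact K) :
    IsClosed (Quotient.mk s '' K) := by
  have : CompactSpace K := isCompact_iff_compactSpace.1 hK
  have hsat : Quotient.mk s ⁻¹' (Quotient.mk s '' K) = Prod.snd '' {p : K × X | s.r p.1 p.2} := by
    ext x
    simp [Quotient.eq]
  refine isQuotientMap_quotient_mk'.isClosed_preimage.1 (?_ : IsClosed (Quotient.mk s ⁻¹' _))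
  rw [hsat]
  exact isClosedMap_snd_of_compactSpace _
    (hs.preimage (continuous_subtype_val.prodMap continuous_id))

theorem stmt_11_general {X : Type*} [TopologicalSpace X] [T2Space X]
    (O : ℕ → Set X) (hOopen : ∀ k, IsOpen (O k))
    (hOcpt : ∀ k, IsCompact (closure (O k)))
    (hOcov : (⋃ k, O k) = Set.univ)
    (s : Setoid X) (hclosed : IsClosed {p : X × X | s.r p.1 p.2}) :
    T2Space (Quotient s) := by
  have hmem (x : X) : ∃ k, x ∈ O k := mem_iUnion.1 (hOcov ▸ mem_univ x)
  have : WeaklyLocallyCompactSpace X := ⟨fun x => by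
    obtain ⟨k, hk⟩ := hmem x
    exact ⟨_, hOcpt k, Filter.mem_of_superset ((hOopen k).mem_nhds hk) subset_closure⟩⟩
  have : SigmaCompactSpace X := ⟨⟨fun k => closure (O k), hOcpt,
    eq_univ_of_forall fun x => (hmem x).elim fun k hk => mem_iUnion.2 ⟨k, subset_closure hk⟩⟩⟩
  exact isQuotientMap_quotient_mk'.t2Space fun _ => Setoid.isClosed_image_mk hclosed

/-- (Bourbaki) Let `X` be a Hausdorff space exhausted by open sets `O k` with compact
closures satisfying `closure (O k) ⊆ O (k+1)`.  If `s` is an equivalence relation on `X`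
which is closed as a subset of `X × X`, then the quotient `X/s` is Hausdorff. -/
theorem stmt_11 {X : Type*} [TopologicalSpace X] [T2Space X]
    (O : ℕ → Set X) (hOopen : ∀ k, IsOpen (O k))
    (hOcpt : ∀ k, IsCompact (closure (O k)))
    (hOmono : ∀ k, closure (O k) ⊆ O (k + 1))
    (hOcov : (⋃ k, O k) = Set.univ)
    (s : Setoid X) (hclosed : IsClosed {p : X × X | s.r p.1 p.2}) :
    T2Space (Quotient s) :=
  stmt_11_general O hOopen hOcpt hOcov s hclosed
end

section
/- Let A be the topological disjoint union of ℝ and (0,∞) × ℝ, and let ∼ be the equivalence relation on A generated by identifying the point x of the first summand with the point (x,0) of the second summand for every x > 0. Let Q = A/∼ with the quotient topology and let q₀ ∈ Q be the class of the point 0 of the first summand. Then Q is not first-countable at q₀: there is no countable family of neighborhoods of q₀ such that every neighborhood of q₀ contains a member of the family. -/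
/-- The disjoint union `ℝ ⊔ ((0,∞) × ℝ)`. -/
abbrev GlueSpace : Type := ℝ ⊕ (Set.Ioi (0 : ℝ) × ℝ)

/-- The relation identifying `x > 0` in the first summand with `(x, 0)` in the second. -/
def glueRel : GlueSpace → GlueSpace → Prop := fun p q =>
  p = q ∨ (∃ x : Set.Ioi (0 : ℝ), p = Sum.inl (x : ℝ) ∧ q = Sum.inr (x, 0)) ∨
    (∃ x : Set.Ioi (0 : ℝ), q = Sum.inl (x : ℝ) ∧ p = Sum.inr (x, 0))

/-- The equivalence relation generated by identifying `x > 0` with `(x, 0)`. -/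
def glueSetoid : Setoid GlueSpace where
  r := glueRel
  iseqv := by
    constructor
    · intro a; exact Or.inl rfl
    · intro a b h
      rcases h with rfl | ⟨x, h1, h2⟩ | ⟨x, h1, h2⟩
      · exact Or.inl rfl
      · exact Or.inr (Or.inr ⟨x, h1, h2⟩)
      · exact Or.inr (Or.inl ⟨x, h1, h2⟩)
    · intro a b c hab hbc
      rcases hab with rfl | ⟨x, ha, hb⟩ | ⟨x, hb, ha⟩
      · exact hbc
      · rcases hbc with rfl | ⟨y, hb', hc⟩ | ⟨y, hc, hb'⟩
        · exact Or.inr (Or.inl ⟨x, ha, hb⟩)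
        · rw [hb] at hb'; cases hb'
        · rw [hb] at hb'
          have hxy : x = y := by
            have h2 := Sum.inr_injective hb'
            exact congrArg Prod.fst h2
          subst hxy
          exact Or.inl (by rw [ha, hc])
      · rcases hbc with rfl | ⟨y, hb', hc⟩ | ⟨y, hc, hb'⟩
        · exact Or.inr (Or.inr ⟨x, hb, ha⟩)
        · rw [hb] at hb'
          have hxy : x = y := Subtype.coe_injective (Sum.inl_injective hb')
          subst hxy
          exact Or.inl (by rw [ha, hc])
        · rw [hb] at hb'; cases hb'

/-!
If `(N k)` were a countable neighbourhood basis at `q₀`, each `N k` would contain a point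
`(x k, t k)` of the half-plane with `0 < x k < 1 / (k + 1)` and `t k > 0`: close to `0` on the
line, `N k` contains glued points `x ∼ (x, 0)`, hence points of the half-plane just above them.
These points run off to the missing edge `x = 0`, so they form a closed subset of the half-plane
avoiding the gluing axis; removing it from `Q` leaves a neighbourhood of `q₀` containing no `N k`.
-/

open Filter Set Topology

lemma isClosed_range_of_tendsto_of_notMem_range {X Y : Type*} [TopologicalSpace X]
    [SequentialSpace X] [T1Space X] [TopologicalSpace Y] [T2Space Y] {f : X → Y}
    (hf : Continuous f) {u : ℕ → X} {y : Y} (hu : Tendsto (f ∘ u) atTop (𝓝 y))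
    (hy : y ∉ range f) : IsClosed (range u) :=
  isClosed_range_of_not_tendsto fun l _ hφ hl =>
    hy ⟨l, tendsto_nhds_unique ((hf.tendsto l).comp hl) (hu.comp hφ.tendsto_atTop)⟩

namespace glueSetoid

lemma mk_inr_zero (x : Ioi (0 : ℝ)) :
    Quotient.mk glueSetoid (Sum.inr (x, 0)) = Quotient.mk glueSetoid (Sum.inl (x : ℝ)) :=
  Quotient.sound (Or.inr (Or.inr ⟨x, rfl, rfl⟩))

lemma eq_inr_of_rel {w : GlueSpace} {z : Ioi (0 : ℝ) × ℝ} (h : glueSetoid w (Sum.inr z))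
    (hz : z.2 ≠ 0) : w = Sum.inr z := by
  rcases h with rfl | ⟨x, -, hzx⟩ | ⟨x, hzx, -⟩
  · rfl
  · obtain rfl := Sum.inr_injective hzx
    exact absurd rfl hz
  · cases hzx

lemma isClosed_mk_inr_image {D : Set (Ioi (0 : ℝ) × ℝ)} (hD : IsClosed D)
    (hD0 : ∀ z ∈ D, z.2 ≠ 0) : IsClosed (Quotient.mk glueSetoid '' (Sum.inr '' D)) := by
  have hsat : Quotient.mk glueSetoid ⁻¹' (Quotient.mk glueSetoid '' (Sum.inr '' D)) =
      Sum.inr '' D := by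
    refine Subset.antisymm ?_ (subset_preimage_image _ _)
    rintro w ⟨_, ⟨z, hz, rfl⟩, hwz⟩
    exact ⟨z, hz, (eq_inr_of_rel (Quotient.exact hwz.symm) (hD0 z hz)).symm⟩
  refine isQuotientMap_quotient_mk'.isClosed_preimage.mp ?_
  change IsClosed (Quotient.mk glueSetoid ⁻¹' _)
  rw [hsat]
  exact isClosedMap_inr D hD

lemma mk_inl_notMem_mk_inr_image {D : Set (Ioi (0 : ℝ) × ℝ)} (hD0 : ∀ z ∈ D, z.2 ≠ 0)
    (y : ℝ) : Quotient.mk glueSetoid (Sum.inl y) ∉ Quotient.mk glueSetoid '' (Sum.inr '' D) := by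
  rintro ⟨_, ⟨z, hz, rfl⟩, h⟩
  cases eq_inr_of_rel (Quotient.exact h.symm) (hD0 z hz)

lemma exists_mk_inr_mem_of_mem_nhds {N : Set (Quotient glueSetoid)}
    (hN : N ∈ 𝓝 (Quotient.mk glueSetoid (Sum.inl 0))) {ε : ℝ} (hε : 0 < ε) :
    ∃ x : Ioi (0 : ℝ), (x : ℝ) < ε ∧ ∃ t > 0, Quotient.mk glueSetoid (Sum.inr (x, t)) ∈ N := by
  have hline : Continuous fun x : ℝ => Quotient.mk glueSetoid (Sum.inl x) :=
    continuous_quotient_mk'.comp continuous_inl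
  obtain ⟨x, hx0, hN_x, hxε⟩ : ∃ x > 0, N ∈ 𝓝 (Quotient.mk glueSetoid (Sum.inl x)) ∧ x < ε :=
    ((hline.tendsto 0).eventually (eventually_mem_nhds_iff.mpr hN)).and (Iio_mem_nhds hε)
      |>.exists_gt
  have hfibre : Continuous fun t : ℝ =>
      Quotient.mk glueSetoid (Sum.inr ((⟨x, hx0⟩ : Ioi (0 : ℝ)), t)) :=
    continuous_quotient_mk'.comp (continuous_inr.comp (continuous_const.prodMk continuous_id))
  rw [← mk_inr_zero ⟨x, hx0⟩] at hN_x
  obtain ⟨t, ht0, htN⟩ := ((hfibre.tendsto 0).eventually hN_x).exists_gt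
  exact ⟨⟨x, hx0⟩, hxε, t, ht0, htN⟩

end glueSetoid

/-- The quotient `Q = (ℝ ⊔ ((0,∞) × ℝ)) / ∼` is not first countable at the class of
`0` in the first summand: no countable family of neighbourhoods of this point is a
neighbourhood basis. -/
theorem stmt_15 :
    ¬ ∃ Nb : ℕ → Set (Quotient glueSetoid),
      (∀ k, Nb k ∈ nhds (Quotient.mk glueSetoid (Sum.inl (0 : ℝ)))) ∧
      ∀ V ∈ nhds (Quotient.mk glueSetoid (Sum.inl (0 : ℝ))), ∃ k, Nb k ⊆ V := by
  rintro ⟨N, hN, hbasis⟩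
  choose x hx t ht htN using fun k : ℕ =>
    glueSetoid.exists_mk_inr_mem_of_mem_nhds (hN k) (Nat.one_div_pos_of_nat (n := k) (α := ℝ))
  have hx_lim : Tendsto (fun k => (x k : ℝ)) atTop (𝓝 0) :=
    tendsto_of_tendsto_of_tendsto_of_le_of_le tendsto_const_nhds
      tendsto_one_div_add_atTop_nhds_zero_nat (fun k => (x k).2.le) fun k => (hx k).le
  set D := range fun k => (x k, t k)
  have hD : IsClosed D :=
    isClosed_range_of_tendsto_of_notMem_range (continuous_subtype_val.comp continuous_fst)
      hx_lim fun ⟨z, hz⟩ => (z.1.2 : (0 : ℝ) < z.1).ne' hz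
  have hD0 : ∀ z ∈ D, z.2 ≠ 0 := by
    rintro _ ⟨k, rfl⟩
    exact (ht k).ne'
  obtain ⟨k, hk⟩ := hbasis _ <| (glueSetoid.isClosed_mk_inr_image hD hD0).isOpen_compl.mem_nhds
    (glueSetoid.mk_inl_notMem_mk_inr_image hD0 0)
  exact hk (htN k) ⟨_, ⟨_, ⟨k, rfl⟩, rfl⟩, rfl⟩
end

section
/- Let c : ℝ → ℝ denote the odd real cube root, c(x) = sign(x)·|x|^{1/3}, and define f : ℝ × ℝ → ℝ by f(x,a) = x + c(x)·sin(1/|a|) for a ≠ 0 and f(x,0) = x. Then for every ε ∈ (0,1): (i) there exists a ∈ (0,ε) and r ∈ (0,ε) such that {x ∈ ℝ : f(x,a) = 0} = {0, r, −r}; and (ii) there exists a' ∈ (0,ε) such that {x ∈ ℝ : f(x,a') = 0} = {0}. -/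
/-!
For `a ≠ 0` the zeros of `f(·, a)` solve `x = -sin(1/|a|) · c(x)`. When `sin(1/|a|) = -t²`,
cubing gives `x³ = t⁶ x`, so the zeros are `0, ±t³`; when `sin(1/|a|) = 0` only `0` remains.
Since `1/|a|` sweeps through whole periods of `sin` as `a → 0⁺`, both values of the sine occur
for arbitrarily small `a > 0`.
-/

/-- The odd real cube root `c(x) = sign x * |x| ^ (1/3)`. -/
noncomputable def oddCbrt (x : ℝ) : ℝ := Real.sign x * |x| ^ ((1 : ℝ) / 3)

/-- `f(x, a) = x + c(x) * sin (1/|a|)` for `a ≠ 0`, and `f(x, 0) = x`. -/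
noncomputable def fStrat (x a : ℝ) : ℝ :=
  if a = 0 then x else x + oddCbrt x * Real.sin (1 / |a|)

open Set

lemma oddCbrt_pow_three (x : ℝ) : oddCbrt x ^ 3 = x := by
  have h : (|x| ^ ((1 : ℝ) / 3)) ^ 3 = |x| := by
    rw [← Real.rpow_natCast, ← Real.rpow_mul (abs_nonneg x)]
    norm_num
  rw [oddCbrt, mul_pow, h]
  rcases lt_trichotomy x 0 with hx | rfl | hx
  · rw [Real.sign_of_neg hx, abs_of_neg hx]; ring
  · simp
  · rw [Real.sign_of_pos hx, abs_of_pos hx]; ring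

lemma oddCbrt_pow_three_eq (t : ℝ) : oddCbrt (t ^ 3) = t :=
  (Odd.strictMono_pow (by decide : Odd 3)).injective (oddCbrt_pow_three _)

lemma setOf_add_oddCbrt_mul_neg_sq_eq_zero (t : ℝ) :
    {x : ℝ | x + oddCbrt x * -t ^ 2 = 0} = {0, t ^ 3, -t ^ 3} := by
  ext x
  simp only [mem_ofPred_eq, mem_insert_iff, mem_singleton_iff]
  constructor
  · intro hx
    have hx' : x = t ^ 2 * oddCbrt x := by linarith
    have hcube : x ^ 3 = (t ^ 2) ^ 3 * x := by
      rw [hx', mul_pow, oddCbrt_pow_three, ← hx']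
    have hfac : x * ((x - t ^ 3) * (x + t ^ 3)) = 0 := by linear_combination hcube
    rcases mul_eq_zero.mp hfac with h | h
    · exact Or.inl h
    · rcases mul_eq_zero.mp h with h | h
      · exact Or.inr (Or.inl (by linarith))
      · exact Or.inr (Or.inr (by linarith))
  · rintro (rfl | rfl | rfl)
    · simp [oddCbrt]
    · rw [oddCbrt_pow_three_eq]; ring
    · rw [← Odd.neg_pow (by decide), oddCbrt_pow_three_eq]; ring

lemma setOf_fStrat_eq_zero {a : ℝ} (ha : a ≠ 0) :
    {x : ℝ | fStrat x a = 0} = {x | x + oddCbrt x * Real.sin (1 / |a|) = 0} := by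
  simp only [fStrat, if_neg ha]

lemma exists_gt_sin_eq (B : ℝ) {y : ℝ} (hy : y ∈ Icc (-1 : ℝ) 1) :
    ∃ T > B, Real.sin T = y := by
  obtain ⟨n, hn⟩ := exists_nat_gt ((B - Real.arcsin y) / (2 * Real.pi))
  refine ⟨Real.arcsin y + n * (2 * Real.pi), ?_, ?_⟩
  · have := (div_lt_iff₀ (by positivity)).mp hn
    linarith
  · rw [Real.sin_add_nat_mul_two_pi, Real.sin_arcsin hy.1 hy.2]

lemma exists_mem_Ioo_sin_one_div_abs_eq {ε : ℝ} (hε : 0 < ε) {y : ℝ}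
    (hy : y ∈ Icc (-1 : ℝ) 1) : ∃ a ∈ Ioo 0 ε, Real.sin (1 / |a|) = y := by
  obtain ⟨T, hT, hsin⟩ := exists_gt_sin_eq (1 / ε) hy
  have hT0 : 0 < T := lt_trans (by positivity) hT
  refine ⟨1 / T, ⟨by positivity, ?_⟩, ?_⟩
  · rwa [one_div_lt hT0 hε]
  · rwa [abs_of_pos (by positivity), one_div_one_div]

/-- Stratawise transversality is not an open condition: for every `ε ∈ (0,1)` there are
`a, r ∈ (0, ε)` such that `f(·, a)` has zero set `{0, r, -r}`, and there is `a' ∈ (0, ε)`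
such that `f(·, a')` has zero set `{0}`. -/
theorem stmt_16 (ε : ℝ) (h0 : 0 < ε) (h1 : ε < 1) :
    (∃ a ∈ Set.Ioo (0 : ℝ) ε, ∃ r ∈ Set.Ioo (0 : ℝ) ε,
      {x : ℝ | fStrat x a = 0} = {0, r, -r}) ∧
    (∃ a' ∈ Set.Ioo (0 : ℝ) ε, {x : ℝ | fStrat x a' = 0} = {0}) := by
  have ht0 : 0 < ε / 2 := by positivity
  have ht1 : ε / 2 ≤ 1 := by linarith
  have ht2 : (ε / 2) ^ 2 ≤ 1 := pow_le_one₀ ht0.le ht1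
  have ht3 : (ε / 2) ^ 3 < ε := by linarith [pow_le_of_le_one ht0.le ht1 three_ne_zero]
  constructor
  · obtain ⟨a, ha, hsin⟩ := exists_mem_Ioo_sin_one_div_abs_eq h0 (y := -(ε / 2) ^ 2)
      ⟨by linarith, by linarith [sq_nonneg (ε / 2)]⟩
    refine ⟨a, ha, (ε / 2) ^ 3, ⟨by positivity, ht3⟩, ?_⟩
    rw [setOf_fStrat_eq_zero ha.1.ne', hsin, setOf_add_oddCbrt_mul_neg_sq_eq_zero]
  · obtain ⟨a, ha, hsin⟩ :=
      exists_mem_Ioo_sin_one_div_abs_eq h0 (y := 0) ⟨by norm_num, by norm_num⟩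
    refine ⟨a, ha, ?_⟩
    rw [setOf_fStrat_eq_zero ha.1.ne', hsin]
    ext x
    simp
end
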